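/- arXiv:cond-mat/0303625 — 2 statements merged into one kernel-verified Lean document; each statement's English description precedes it below -/
import Mathlib

section
/- Let P : Ω → 𝒫 and F : Ω → ℱ be random variables on a finite probability space (Ω, ℙ), with 𝒫 and ℱ finite, and assume ℙ(P = p) > 0 for every p ∈ 𝒫. If η : 𝒫 → 𝒮 (𝒮 finite) is prescient, i.e., I[F; η∘P] = I[F; P], then the statistical complexity of η is at least that of the causal states: H[η∘P] ≥ H[ε∘P]. Hence the causal states are the prescient states of minimal statistical complexity. -/
open scoped BigOperators
attribute [local instance] Classical.propDecidable

/-- Probability of an event on a finite probability space given by a weight function. -/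
noncomputable def prb {Ω : Type*} [Fintype Ω] (μ : Ω → ℝ) (E : Set Ω) : ℝ :=
  ∑ ω, if ω ∈ E then μ ω else 0

/-- The distribution of a random variable `X`. -/
noncomputable def pdist {Ω α : Type*} [Fintype Ω] (μ : Ω → ℝ) (X : Ω → α) (x : α) : ℝ :=
  prb μ {ω | X ω = x}

/-- Shannon entropy `H[X]` (in nats; `Real.log 0 = 0` gives the convention `0·log 0 = 0`). -/
noncomputable def Hent {Ω α : Type*} [Fintype Ω] [Fintype α] (μ : Ω → ℝ) (X : Ω → α) : ℝ :=
  -∑ x, pdist μ X x * Real.log (pdist μ X x)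

/-- Mutual information `I[X;Y] = H[X] + H[Y] - H[X,Y]`. -/
noncomputable def Iinfo {Ω α β : Type*} [Fintype Ω] [Fintype α] [Fintype β]
    (μ : Ω → ℝ) (X : Ω → α) (Y : Ω → β) : ℝ :=
  Hent μ X + Hent μ Y - Hent μ (fun ω => (X ω, Y ω))

/-- Conditional entropy `H[X|Y] = H[X,Y] - H[Y]`. -/
noncomputable def condH {Ω α β : Type*} [Fintype Ω] [Fintype α] [Fintype β]
    (μ : Ω → ℝ) (X : Ω → α) (Y : Ω → β) : ℝ :=
  Hent μ (fun ω => (X ω, Y ω)) - Hent μ Y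

/-- Conditional probability `ℙ(E | F)`. -/
noncomputable def cprob {Ω : Type*} [Fintype Ω] (μ : Ω → ℝ) (E F : Set Ω) : ℝ :=
  prb μ (E ∩ F) / prb μ F

/-- Causal equivalence of pasts: `p ∼ p'` iff they give the same conditional
distribution over futures. -/
def CausalEquiv {Ω Pst Fut : Type*} [Fintype Ω] (μ : Ω → ℝ)
    (P : Ω → Pst) (F : Ω → Fut) (p p' : Pst) : Prop :=
  ∀ f : Fut, cprob μ {ω | F ω = f} {ω | P ω = p} = cprob μ {ω | F ω = f} {ω | P ω = p'}

/-- Causal equivalence as a setoid on the space of pasts. -/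
def causalSetoid {Ω Pst Fut : Type*} [Fintype Ω] (μ : Ω → ℝ)
    (P : Ω → Pst) (F : Ω → Fut) : Setoid Pst where
  r := CausalEquiv μ P F
  iseqv := ⟨fun _ _ => rfl, fun h f => (h f).symm, fun h h' f => (h f).trans (h' f)⟩

/-- The causal state map `ε` sends a past to its causal equivalence class. -/
def causalState {Ω Pst Fut : Type*} [Fintype Ω] (μ : Ω → ℝ)
    (P : Ω → Pst) (F : Ω → Fut) (p : Pst) : Quotient (causalSetoid μ P F) :=
  Quotient.mk (causalSetoid μ P F) p

/-!
Prescience says `H[F | η∘P] = H[F | P]`. Conditioning on the coarser variable `η∘P` raises the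
conditional entropy by the `ℙ(P = p)`-average of the Kullback–Leibler divergences between
`ℙ(F | P = p)` and `ℙ(F | η∘P = η p)`; by Gibbs' inequality these are nonnegative, so equality
forces the two conditional laws to agree. Hence pasts with the same `η`-state are causally
equivalent, `ε∘P` is a function of `η∘P`, and a function of a random variable has no larger
entropy.
-/

open Finset InformationTheory

noncomputable def condLaw {Ω α : Type*} [Fintype Ω] (μ : Ω → ℝ) (X : Ω → α) (B : Set Ω)
    (x : α) : ℝ :=
  cprob μ {ω | X ω = x} B

noncomputable def klDivFin {ι : Type*} [Fintype ι] (q r : ι → ℝ) : ℝ :=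
  ∑ i, q i * (Real.log (q i) - Real.log (r i))

section Gibbs

variable {ι : Type*} [Fintype ι] {q r : ι → ℝ}

lemma mul_log_sub_log_eq_mul_klFun {a b : ℝ} (ha : 0 ≤ a) (hb : 0 ≤ b) (hab : b = 0 → a = 0) :
    a * (Real.log a - Real.log b) = b * klFun (a / b) + (a - b) := by
  rcases ha.eq_or_lt with rfl | ha
  · simp [klFun]
  have hb : 0 < b := hb.lt_of_ne fun h => ha.ne' (hab h.symm)
  rw [klFun, Real.log_div ha.ne' hb.ne']
  field_simp
  ring

lemma klDivFin_eq_sum_mul_klFun (hq : ∀ i, 0 ≤ q i) (hr : ∀ i, 0 ≤ r i)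
    (hsum : ∑ i, q i = ∑ i, r i) (hac : ∀ i, r i = 0 → q i = 0) :
    klDivFin q r = ∑ i, r i * klFun (q i / r i) := by
  rw [klDivFin, Finset.sum_congr rfl fun i _ => mul_log_sub_log_eq_mul_klFun (hq i) (hr i) (hac i),
    Finset.sum_add_distrib, Finset.sum_sub_distrib, hsum, sub_self, add_zero]

lemma klDivFin_nonneg (hq : ∀ i, 0 ≤ q i) (hr : ∀ i, 0 ≤ r i)
    (hsum : ∑ i, q i = ∑ i, r i) (hac : ∀ i, r i = 0 → q i = 0) :
    0 ≤ klDivFin q r := by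
  rw [klDivFin_eq_sum_mul_klFun hq hr hsum hac]
  exact Finset.sum_nonneg fun i _ => mul_nonneg (hr i) (klFun_nonneg (div_nonneg (hq i) (hr i)))

lemma eq_of_klDivFin_eq_zero (hq : ∀ i, 0 ≤ q i) (hr : ∀ i, 0 ≤ r i)
    (hsum : ∑ i, q i = ∑ i, r i) (hac : ∀ i, r i = 0 → q i = 0) (h : klDivFin q r = 0) :
    q = r := by
  rw [klDivFin_eq_sum_mul_klFun hq hr hsum hac, Finset.sum_eq_zero_iff_of_nonneg fun i _ =>
    mul_nonneg (hr i) (klFun_nonneg (div_nonneg (hq i) (hr i)))] at h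
  funext i
  rcases mul_eq_zero.1 (h i (mem_univ i)) with hri | hkl
  · rw [hri, hac i hri]
  · rwa [klFun_eq_zero_iff (div_nonneg (hq i) (hr i)),
      div_eq_one_iff_eq fun hri => by simp [hri, hac i hri] at hkl] at hkl

end Gibbs

section FiniteProbability

variable {Ω α β : Type*} [Fintype Ω] {μ : Ω → ℝ}

lemma prb_nonneg (hμ : ∀ ω, 0 ≤ μ ω) (E : Set Ω) : 0 ≤ prb μ E :=
  Finset.sum_nonneg fun ω _ => by split_ifs <;> simp [hμ ω]

lemma prb_mono (hμ : ∀ ω, 0 ≤ μ ω) {E E' : Set Ω} (h : E ⊆ E') : prb μ E ≤ prb μ E' :=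
  Finset.sum_le_sum fun ω _ => by
    split_ifs with hE hE'
    exacts [le_rfl, absurd (h hE) hE', hμ ω, le_rfl]

lemma le_prb (hμ : ∀ ω, 0 ≤ μ ω) {E : Set Ω} {ω : Ω} (hω : ω ∈ E) : μ ω ≤ prb μ E := by
  unfold prb
  simpa [hω] using Finset.single_le_sum (f := fun ω => if ω ∈ E then μ ω else 0)
    (fun ω _ => by split_ifs <;> simp [hμ ω]) (mem_univ ω)

lemma sum_pdist_mul [Fintype α] (X : Ω → α) (L : α → ℝ) :
    ∑ x, pdist μ X x * L x = ∑ ω, μ ω * L (X ω) := by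
  simp only [pdist, prb, Finset.sum_mul, Set.mem_ofPred_eq, ite_mul, zero_mul]
  rw [Finset.sum_comm]
  simp

lemma Hent_eq_sum [Fintype α] (X : Ω → α) :
    Hent μ X = -∑ ω, μ ω * Real.log (pdist μ X (X ω)) := by
  rw [Hent, sum_pdist_mul]

lemma Hent_le_of_determined [Fintype α] [Fintype β] (hμ : ∀ ω, 0 ≤ μ ω) {X : Ω → α}
    {Y : Ω → β} (h : ∀ ω ω', Y ω = Y ω' → X ω = X ω') : Hent μ X ≤ Hent μ Y := by
  rw [Hent_eq_sum, Hent_eq_sum, neg_le_neg_iff]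
  refine Finset.sum_le_sum fun ω _ => ?_
  rcases (hμ ω).eq_or_lt with h0 | hpos
  · simp [← h0]
  refine mul_le_mul_of_nonneg_left (Real.log_le_log ?_ ?_) hpos.le
  · exact hpos.trans_le (le_prb hμ rfl)
  · exact prb_mono hμ fun ω' hω' => h ω' ω hω'

lemma pdist_prodMk (X : Ω → α) (Y : Ω → β) (x : α) (y : β) :
    pdist μ (fun ω => (X ω, Y ω)) (x, y) = prb μ ({ω | X ω = x} ∩ {ω | Y ω = y}) := by
  simp only [pdist, Prod.mk.injEq]
  rfl

lemma pdist_nonneg (hμ : ∀ ω, 0 ≤ μ ω) (X : Ω → α) (x : α) : 0 ≤ pdist μ X x :=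
  prb_nonneg hμ _

lemma condLaw_nonneg (hμ : ∀ ω, 0 ≤ μ ω) (X : Ω → α) (B : Set Ω) (x : α) :
    0 ≤ condLaw μ X B x :=
  div_nonneg (prb_nonneg hμ _) (prb_nonneg hμ _)

lemma prb_inter_eq_cprob_mul (hμ : ∀ ω, 0 ≤ μ ω) (E B : Set Ω) :
    prb μ (E ∩ B) = cprob μ E B * prb μ B := by
  rcases (prb_nonneg hμ B).eq_or_lt with h0 | hpos
  · rw [← h0, mul_zero]
    exact le_antisymm (h0 ▸ prb_mono hμ Set.inter_subset_right) (prb_nonneg hμ _)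
  · rw [cprob, div_mul_cancel₀ _ hpos.ne']

lemma sum_condLaw [Fintype α] (X : Ω → α) {B : Set Ω} (hB : prb μ B ≠ 0) :
    ∑ x, condLaw μ X B x = 1 := by
  have hsum : ∑ x, prb μ ({ω | X ω = x} ∩ B) = prb μ B := by
    simp only [prb, Set.mem_inter_iff, Set.mem_ofPred_eq, ite_and]
    rw [Finset.sum_comm]
    simp
  simp only [condLaw, cprob, ← Finset.sum_div, hsum, div_self hB]

lemma condLaw_eq_zero_of_subset (hμ : ∀ ω, 0 ≤ μ ω) (X : Ω → α) {B B' : Set Ω} (hB : B ⊆ B')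
    {x : α} (h : condLaw μ X B' x = 0) : condLaw μ X B x = 0 := by
  have hle := prb_mono hμ (Set.inter_subset_inter_right {ω | X ω = x} hB)
  rw [prb_inter_eq_cprob_mul hμ _ B', show cprob μ {ω | X ω = x} B' = 0 from h, zero_mul] at hle
  rw [condLaw, cprob, le_antisymm hle (prb_nonneg hμ _), zero_div]

lemma condH_eq_Hent_sub_Iinfo [Fintype α] [Fintype β] (X : Ω → α) (Y : Ω → β) :
    condH μ X Y = Hent μ X - Iinfo μ X Y := by
  rw [condH, Iinfo]
  ring

lemma condH_eq_sum [Fintype α] [Fintype β] (hμ : ∀ ω, 0 ≤ μ ω) (X : Ω → α) (Y : Ω → β) :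
    condH μ X Y = -∑ ω, μ ω * Real.log (condLaw μ X {ω' | Y ω' = Y ω} (X ω)) := by
  have hsplit : ∀ ω, μ ω * Real.log (condLaw μ X {ω' | Y ω' = Y ω} (X ω)) =
      μ ω * Real.log (pdist μ (fun ω => (X ω, Y ω)) (X ω, Y ω)) -
        μ ω * Real.log (pdist μ Y (Y ω)) := by
    intro ω
    rcases (hμ ω).eq_or_lt with h0 | hpos
    · simp [← h0]
    have hXY : 0 < pdist μ (fun ω => (X ω, Y ω)) (X ω, Y ω) := hpos.trans_le (le_prb hμ rfl)
    have hY : 0 < prb μ {ω' | Y ω' = Y ω} := hpos.trans_le (le_prb hμ rfl)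
    rw [condLaw, cprob, ← pdist_prodMk, Real.log_div hXY.ne' hY.ne', mul_sub]
    rfl
  rw [condH, Hent_eq_sum, Hent_eq_sum, Finset.sum_congr rfl fun ω _ => hsplit ω,
    Finset.sum_sub_distrib]
  ring

lemma klDivFin_condLaw_nonneg [Fintype α] (hμ : ∀ ω, 0 ≤ μ ω) (X : Ω → α) {B B' : Set Ω}
    (hB : 0 < prb μ B) (hBB' : B ⊆ B') : 0 ≤ klDivFin (condLaw μ X B) (condLaw μ X B') := by
  have hB' := hB.trans_le (prb_mono hμ hBB')
  exact klDivFin_nonneg (condLaw_nonneg hμ X B) (condLaw_nonneg hμ X B')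
    (by rw [sum_condLaw X hB.ne', sum_condLaw X hB'.ne'])
    fun _ => condLaw_eq_zero_of_subset hμ X hBB'

lemma condLaw_eq_of_klDivFin_eq_zero [Fintype α] (hμ : ∀ ω, 0 ≤ μ ω) (X : Ω → α) {B B' : Set Ω}
    (hB : 0 < prb μ B) (hBB' : B ⊆ B') (h : klDivFin (condLaw μ X B) (condLaw μ X B') = 0) :
    condLaw μ X B = condLaw μ X B' := by
  have hB' := hB.trans_le (prb_mono hμ hBB')
  exact eq_of_klDivFin_eq_zero (condLaw_nonneg hμ X B) (condLaw_nonneg hμ X B')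
    (by rw [sum_condLaw X hB.ne', sum_condLaw X hB'.ne'])
    (fun _ => condLaw_eq_zero_of_subset hμ X hBB') h

end FiniteProbability

section Refinement

variable {Ω α β γ : Type*} [Fintype Ω] [Fintype α] [Fintype β] [Fintype γ] {μ : Ω → ℝ}

lemma condH_comp_sub_condH (hμ : ∀ ω, 0 ≤ μ ω) (X : Ω → α) (Y : Ω → β) (g : α → γ) :
    condH μ Y (fun ω => g (X ω)) - condH μ Y X =
      ∑ x, pdist μ X x *
        klDivFin (condLaw μ Y {ω | X ω = x}) (condLaw μ Y {ω | g (X ω) = g x}) := by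
  rw [condH_eq_sum hμ, condH_eq_sum hμ, neg_sub_neg, ← Finset.sum_sub_distrib]
  simp_rw [← mul_sub]
  refine (sum_pdist_mul (fun ω => (Y ω, X ω)) fun yx =>
    Real.log (condLaw μ Y {ω | X ω = yx.2} yx.1) -
      Real.log (condLaw μ Y {ω | g (X ω) = g yx.2} yx.1)).symm.trans ?_
  rw [Fintype.sum_prod_type, Finset.sum_comm]
  refine Finset.sum_congr rfl fun x _ => ?_
  rw [klDivFin, Finset.mul_sum]
  refine Finset.sum_congr rfl fun y _ => ?_
  rw [pdist_prodMk, prb_inter_eq_cprob_mul hμ, pdist, condLaw]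
  ring

lemma condLaw_eq_of_condH_comp_eq (hμ : ∀ ω, 0 ≤ μ ω) {X : Ω → α} {Y : Ω → β} (g : α → γ)
    (h : condH μ Y (fun ω => g (X ω)) = condH μ Y X) {x : α} (hx : 0 < pdist μ X x) :
    condLaw μ Y {ω | X ω = x} = condLaw μ Y {ω | g (X ω) = g x} := by
  have hfiber : ∀ x, {ω | X ω = x} ⊆ {ω | g (X ω) = g x} := fun x ω hω => congrArg g hω
  have hzero := condH_comp_sub_condH hμ X Y g
  rw [h, sub_self, eq_comm, Finset.sum_eq_zero_iff_of_nonneg fun x _ =>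
    (pdist_nonneg hμ X x).eq_or_lt.elim (fun h0 => by simp [← h0])
      fun hpos => mul_nonneg hpos.le (klDivFin_condLaw_nonneg hμ Y hpos (hfiber x))] at hzero
  exact condLaw_eq_of_klDivFin_eq_zero hμ Y hx (hfiber x)
    ((mul_eq_zero.1 (hzero x (mem_univ x))).resolve_left hx.ne')

end Refinement

theorem causal_states_minimal_complexity_general {Ω Pst Fut S : Type*}
    [Fintype Ω] [Fintype Pst] [Fintype Fut] [Fintype S]
    (μ : Ω → ℝ) (hμ0 : ∀ ω, 0 ≤ μ ω)
    (P : Ω → Pst) (F : Ω → Fut)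
    (hP : ∀ p : Pst, 0 < prb μ {ω | P ω = p})
    (η : Pst → S) (hpres : Iinfo μ F (fun ω => η (P ω)) = Iinfo μ F P) :
    Hent μ (fun ω => causalState μ P F (P ω)) ≤ Hent μ (fun ω => η (P ω)) := by
  have hcond : condH μ F (fun ω => η (P ω)) = condH μ F P := by
    rw [condH_eq_Hent_sub_Iinfo, condH_eq_Hent_sub_Iinfo, hpres]
  have hrefines : ∀ p p', η p = η p' →
      condLaw μ F {ω | P ω = p} = condLaw μ F {ω | P ω = p'} := by
    intro p p' hpp'
    rw [condLaw_eq_of_condH_comp_eq hμ0 η hcond (hP p), hpp',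
      ← condLaw_eq_of_condH_comp_eq hμ0 η hcond (hP p')]
  exact Hent_le_of_determined hμ0 fun ω ω' h => Quotient.sound (congrFun (hrefines _ _ h))

/-- the causal states are the prescient states of minimal statistical
complexity: any prescient `η` has `H[η∘P] ≥ H[ε∘P]`. -/
theorem causal_states_minimal_complexity {Ω Pst Fut S : Type*}
    [Fintype Ω] [Fintype Pst] [Fintype Fut] [Fintype S]
    (μ : Ω → ℝ) (hμ0 : ∀ ω, 0 ≤ μ ω) (hμ1 : ∑ ω, μ ω = 1)
    (P : Ω → Pst) (F : Ω → Fut)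
    (hP : ∀ p : Pst, 0 < prb μ {ω | P ω = p})
    (η : Pst → S) (hpres : Iinfo μ F (fun ω => η (P ω)) = Iinfo μ F P) :
    Hent μ (fun ω => causalState μ P F (P ω)) ≤ Hent μ (fun ω => η (P ω)) :=
  causal_states_minimal_complexity_general μ hμ0 P F hP η hpres
end

section
/- Let 𝒜 be a finite type, let π be a probability distribution on 𝒜, and let T : 𝒜 × 𝒜 → [0,1] be a stochastic matrix (∑_t T(s,t) = 1 for all s) for which π is stationary (∑_s π(s) T(s,t) = π(t) for all t). Fix n ≥ 1 and let (S_0, S_1, …, S_n) be random variables whose joint distribution is ℙ(S_0 = s_0, …, S_n = s_n) = π(s_0) · ∏_{i=0}^{n-1} T(s_i, s_{i+1}) (a stationary first-order Markov chain). Then the statistical complexity decomposes as the sum of the predictive information and the entropy rate: H[S_0] = I[(S_1, …, S_n); S_0] + H[S_1 | S_0]. -/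
/-!
Write `E m = H[S_0, …, S_m]` (`chainEntropy`). Because the rows of `T` sum to one,
`(S_0, …, S_k)` is again the chain of length `k`; because `π` is stationary, so is
`(S_1, …, S_n)` with `k = n - 1`, and every `S_m` is `π`-distributed. Splitting off the last
coordinate with `negMulLog (p * T s t) = T s t * negMulLog p + p * negMulLog (T s t)` shows that
`E` grows by the same amount `h_μ = ∑ s, π s * ∑ t, negMulLog (T s t)` at every step. The four
entropies in the claim are `E 0`, `E (n - 1)`, `E n` and `E 1`, so it reduces to
`E n - E (n - 1) = E 1 - E 0`.
-/

open scoped BigOperators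
attribute [local instance] Classical.propDecidable

noncomputable def chainDist {A : Type*} [Fintype A] (n : ℕ) (π : A → ℝ) (T : A → A → ℝ) :
    (Fin (n + 1) → A) → ℝ :=
  fun ω => π (ω 0) * ∏ i : Fin n, T (ω i.castSucc) (ω i.succ)

section FiniteEntropy

variable {Ω α : Type*} [Fintype Ω] (μ : Ω → ℝ)

lemma Hent_eq_sum_negMulLog [Fintype α] (X : Ω → α) :
    Hent μ X = ∑ x, Real.negMulLog (pdist μ X x) := by
  simp only [Hent, Real.negMulLog, neg_mul, Finset.sum_neg_distrib]

lemma Hent_eq_of_pdist_eq [Fintype α] {Ω' : Type*} [Fintype Ω'] {ν : Ω' → ℝ}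
    {X : Ω → α} {Y : Ω' → α} (h : pdist μ X = pdist ν Y) : Hent μ X = Hent ν Y := by
  rw [Hent, Hent, h]

lemma pdist_apply_of_injective {X : Ω → α} (hX : X.Injective) (ω : Ω) :
    pdist μ X (X ω) = μ ω := by
  simp [pdist, prb, hX.eq_iff]

lemma Hent_of_bijective [Fintype α] {X : Ω → α} (hX : X.Bijective) :
    Hent μ X = ∑ ω, Real.negMulLog (μ ω) := by
  rw [Hent_eq_sum_negMulLog, ← (Equiv.ofBijective X hX).sum_comp]
  simp only [Equiv.ofBijective_apply, pdist_apply_of_injective μ hX.injective]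

lemma sum_mul_comp_eq_sum_pdist_mul [Fintype α] (X : Ω → α) (f : α → ℝ) :
    ∑ ω, μ ω * f (X ω) = ∑ x, pdist μ X x * f x := by
  simp only [pdist, prb, Set.mem_ofPred_eq, Finset.sum_mul, ite_mul, zero_mul]
  rw [Finset.sum_comm]
  simp

lemma pdist_comp_marginal {β γ : Type*} [Fintype β] [Fintype γ] (e : γ × β ≃ Ω)
    (ν : β → ℝ) (hν : ∀ b, ∑ c, μ (e (c, b)) = ν b) (X : β → α) :
    pdist μ (fun ω => X (e.symm ω).2) = pdist ν X := by
  funext x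
  simp only [pdist, prb, Set.mem_ofPred_eq, ← e.sum_comp, Equiv.symm_apply_apply,
    Fintype.sum_prod_type]
  rw [Finset.sum_comm]
  refine Finset.sum_congr rfl fun b _ => ?_
  split_ifs
  · exact hν b
  · exact Finset.sum_const_zero

end FiniteEntropy

section MarkovChain

variable {A : Type*} [Fintype A] (π : A → ℝ) (T : A → A → ℝ)

lemma chainDist_snoc (m : ℕ) (g : Fin (m + 1) → A) (t : A) :
    chainDist (m + 1) π T (Fin.snoc g t) = chainDist m π T g * T (g (Fin.last m)) t := by
  simp only [chainDist, Fin.prod_univ_castSucc, Fin.snoc_castSucc, Fin.succ_castSucc,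
    Fin.succ_last, Fin.snoc_last, ← Fin.castSucc_zero]
  ring

lemma chainDist_cons (m : ℕ) (s : A) (f : Fin (m + 1) → A) :
    chainDist (m + 1) π T (Fin.cons s f) =
      π s * T s (f 0) * ∏ i : Fin m, T (f i.castSucc) (f i.succ) := by
  simp only [chainDist, Fin.prod_univ_succ, Fin.castSucc_zero, Fin.cons_zero, Fin.cons_succ,
    ← Fin.succ_castSucc]
  ring

lemma sum_chainDist_snoc (hTrow : ∀ s, ∑ t, T s t = 1) (m : ℕ) (g : Fin (m + 1) → A) :
    ∑ t, chainDist (m + 1) π T (Fin.snoc g t) = chainDist m π T g := by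
  simp only [chainDist_snoc, ← Finset.mul_sum, hTrow, mul_one]

lemma sum_chainDist_cons (hstat : ∀ t, ∑ s, π s * T s t = π t) (m : ℕ)
    (f : Fin (m + 1) → A) :
    ∑ s, chainDist (m + 1) π T (Fin.cons s f) = chainDist m π T f := by
  simp only [chainDist_cons, ← Finset.sum_mul, hstat]
  rfl

variable {α : Type*}

lemma pdist_chainDist_comp_init (hTrow : ∀ s, ∑ t, T s t = 1) (m : ℕ)
    (X : (Fin (m + 1) → A) → α) :
    pdist (chainDist (m + 1) π T) (fun ω => X (Fin.init ω)) = pdist (chainDist m π T) X :=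
  pdist_comp_marginal _ (Fin.snocEquiv fun _ => A) _ (sum_chainDist_snoc π T hTrow m) X

lemma pdist_chainDist_comp_tail (hstat : ∀ t, ∑ s, π s * T s t = π t) (m : ℕ)
    (X : (Fin (m + 1) → A) → α) :
    pdist (chainDist (m + 1) π T) (fun ω => X (Fin.tail ω)) = pdist (chainDist m π T) X :=
  pdist_comp_marginal _ (Fin.consEquiv fun _ => A) _ (sum_chainDist_cons π T hstat m) X

lemma pdist_chainDist_comp_castLE (hTrow : ∀ s, ∑ t, T s t = 1) {k m : ℕ} (hkm : k ≤ m)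
    (X : (Fin (k + 1) → A) → α) :
    pdist (chainDist m π T) (fun ω => X (fun i => ω (Fin.castLE (by omega) i))) =
      pdist (chainDist k π T) X := by
  induction m, hkm using Nat.le_induction with
  | base => simp only [Fin.castLE_rfl, id_eq]
  | succ m hkm ih =>
    rw [← ih, ← pdist_chainDist_comp_init π T hTrow m]
    rfl

lemma pdist_chainDist_zero : pdist (chainDist 0 π T) (fun ω => ω 0) = π := by
  funext s
  simpa [chainDist] using pdist_apply_of_injective (chainDist 0 π T)
    (Equiv.funUnique (Fin 1) A).injective (Equiv.funUnique (Fin 1) A |>.symm s)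

lemma pdist_chainDist_last (hstat : ∀ t, ∑ s, π s * T s t = π t) (m : ℕ) :
    pdist (chainDist m π T) (fun ω => ω (Fin.last m)) = π := by
  induction m with
  | zero => exact pdist_chainDist_zero π T
  | succ m ih => exact (pdist_chainDist_comp_tail π T hstat m _).trans ih

noncomputable def chainEntropy (m : ℕ) : ℝ :=
  ∑ ω : Fin (m + 1) → A, Real.negMulLog (chainDist m π T ω)

lemma chainEntropy_succ (hTrow : ∀ s, ∑ t, T s t = 1)
    (hstat : ∀ t, ∑ s, π s * T s t = π t) (m : ℕ) :
    chainEntropy π T (m + 1) =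
      chainEntropy π T m + ∑ s, π s * ∑ t, Real.negMulLog (T s t) := by
  have hlast := sum_mul_comp_eq_sum_pdist_mul (chainDist m π T) (fun ω => ω (Fin.last m))
    fun s => ∑ t, Real.negMulLog (T s t)
  rw [pdist_chainDist_last π T hstat m] at hlast
  calc chainEntropy π T (m + 1)
      = ∑ g, ∑ t, Real.negMulLog (chainDist (m + 1) π T (Fin.snoc g t)) := by
        rw [chainEntropy, ← (Fin.snocEquiv fun _ => A).sum_comp, Fintype.sum_prod_type,
          Finset.sum_comm]
        rfl
    _ = ∑ g, ∑ t, (T (g (Fin.last m)) t * Real.negMulLog (chainDist m π T g) +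
          chainDist m π T g * Real.negMulLog (T (g (Fin.last m)) t)) := by
        simp only [chainDist_snoc, Real.negMulLog_mul]
    _ = chainEntropy π T m + ∑ s, π s * ∑ t, Real.negMulLog (T s t) := by
        simp only [Finset.sum_add_distrib, ← Finset.sum_mul, ← Finset.mul_sum, hTrow, one_mul,
          hlast, chainEntropy]

lemma Hent_chainDist_tail (hstat : ∀ t, ∑ s, π s * T s t = π t) (m : ℕ) :
    Hent (chainDist (m + 1) π T) Fin.tail = chainEntropy π T m :=
  (Hent_eq_of_pdist_eq _ (pdist_chainDist_comp_tail π T hstat m id)).trans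
    (Hent_of_bijective _ Function.bijective_id)

lemma Hent_chainDist_tail_head (m : ℕ) :
    Hent (chainDist m π T) (fun ω => (Fin.tail ω, ω 0)) = chainEntropy π T m :=
  Hent_of_bijective _ ((Fin.consEquiv fun _ => A).symm.trans (Equiv.prodComm _ _)).bijective

lemma Hent_chainDist_head (hTrow : ∀ s, ∑ t, T s t = 1) (m : ℕ) :
    Hent (chainDist m π T) (fun ω => ω 0) = chainEntropy π T 0 :=
  (Hent_eq_of_pdist_eq _
      (pdist_chainDist_comp_castLE π T hTrow (Nat.zero_le m) fun g => g 0)).trans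
    (Hent_of_bijective _ (Equiv.funUnique (Fin 1) A).bijective)

lemma Hent_chainDist_one_zero (hTrow : ∀ s, ∑ t, T s t = 1) (m : ℕ) :
    Hent (chainDist (m + 1) π T) (fun ω => (ω 1, ω 0)) = chainEntropy π T 1 :=
  (Hent_eq_of_pdist_eq _
      (pdist_chainDist_comp_castLE π T hTrow (Nat.le_add_left 1 m) fun g => (g 1, g 0))).trans
    (Hent_of_bijective _ ((piFinTwoEquiv fun _ => A).trans (Equiv.prodComm _ _)).bijective)

end MarkovChain

theorem markov_complexity_decomposition_general {A : Type*} [Fintype A]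
    (π : A → ℝ) (T : A → A → ℝ)
    (hTrow : ∀ s, ∑ t, T s t = 1)
    (hstat : ∀ t, ∑ s, π s * T s t = π t)
    (n : ℕ) (hn : 1 ≤ n) :
    Hent (chainDist n π T) (fun ω => ω 0) =
      Iinfo (chainDist n π T) (fun ω => (fun i : Fin n => ω i.succ)) (fun ω => ω 0)
        + condH (chainDist n π T) (fun ω => ω 1) (fun ω => ω 0) := by
  obtain ⟨m, rfl⟩ : ∃ m, n = m + 1 := ⟨n - 1, by omega⟩
  have hF : Hent (chainDist (m + 1) π T) (fun ω => fun i : Fin (m + 1) => ω i.succ) =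
      chainEntropy π T m := Hent_chainDist_tail π T hstat m
  have hFS : Hent (chainDist (m + 1) π T) (fun ω => (fun i : Fin (m + 1) => ω i.succ, ω 0)) =
      chainEntropy π T (m + 1) := Hent_chainDist_tail_head π T (m + 1)
  have hrate₀ := chainEntropy_succ π T hTrow hstat 0
  have hrate := chainEntropy_succ π T hTrow hstat m
  rw [Iinfo, condH, hF, hFS, Hent_chainDist_one_zero π T hTrow m, Hent_chainDist_head π T hTrow]
  rw [zero_add] at hrate₀
  linarith

/-- for a stationary first-order Markov chain `(S_0, …, S_n)`, `n ≥ 1`, the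
statistical complexity decomposes as predictive information plus entropy rate:
`H[S_0] = I[(S_1, …, S_n); S_0] + H[S_1 | S_0]`. -/
theorem markov_complexity_decomposition {A : Type*} [Fintype A]
    (π : A → ℝ) (T : A → A → ℝ)
    (hπ0 : ∀ s, 0 ≤ π s) (hπ1 : ∑ s, π s = 1)
    (hT0 : ∀ s t, 0 ≤ T s t) (hT1 : ∀ s t, T s t ≤ 1)
    (hTrow : ∀ s, ∑ t, T s t = 1)
    (hstat : ∀ t, ∑ s, π s * T s t = π t)
    (n : ℕ) (hn : 1 ≤ n) :
    Hent (chainDist n π T) (fun ω => ω 0) =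
      Iinfo (chainDist n π T) (fun ω => (fun i : Fin n => ω i.succ)) (fun ω => ω 0)
        + condH (chainDist n π T) (fun ω => ω 1) (fun ω => ω 0) :=
  markov_complexity_decomposition_general π T hTrow hstat n hn
end
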